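/- arXiv:2308.13043 — 3 statements merged into one kernel-verified Lean document; each statement's English description precedes it below -/
import Mathlib

section
/- Let p be a prime and let k, e, b, a be positive integers, and set w = p^k. Let G be a finite group acting on a finite set V with |V| = w^(e·b), and suppose there is a point v₀ ∈ V fixed by every element of G and that |G| divides k·a·e²·(w − 1). Then the number of orbits of G on V is at least ⌈(w^e − 1)/(log₂(w)·a·e²·(w − 1))⌉ + 1. -/
/-!
Every orbit has at most `|G|` points and the orbit of the fixed point `v₀` has exactly one, so
`|V| - 1 ≤ (#orbits - 1)·|G|`. With `|V| ≥ w^e` and `|G| ≤ k·a·e²·(w - 1)` this bounds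
`#orbits - 1` from below by `(w^e - 1)/(k·a·e²·(w - 1))`, and `k ≤ log₂ w` only shrinks the bound.
-/

namespace MulAction

variable (G : Type*) {V : Type*} [Group G] [MulAction G V]

theorem card_orbit_le_card_group [Finite G] (x : V) : Nat.card (orbit G x) ≤ Nat.card G :=
  Finite.card_range_le _

theorem card_eq_sum_card_orbit [Finite V] [Fintype (orbitRel.Quotient G V)] :
    Nat.card V = ∑ ω : orbitRel.Quotient G V, Nat.card ω.orbit := by
  rw [Nat.card_congr (selfEquivSigmaOrbits' G V), Nat.card_sigma]

theorem card_sub_one_le_of_smul_eq_self [Finite G] [Finite V] {v₀ : V}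
    (hfix : ∀ g : G, g • v₀ = v₀) :
    Nat.card V - 1 ≤ (Nat.card (orbitRel.Quotient G V) - 1) * Nat.card G := by
  classical
  have := Fintype.ofFinite (orbitRel.Quotient G V)
  let ω₀ : orbitRel.Quotient G V := ⟦v₀⟧
  have horbit₀ : Nat.card ω₀.orbit = 1 := by
    rw [orbitRel.Quotient.orbit_mk, Nat.card_eq_one_iff_exists]
    exact ⟨⟨v₀, mem_orbit_self v₀⟩, fun ⟨_, g, hg⟩ => by subst hg; simp [hfix g]⟩
  suffices Nat.card V ≤ 1 + (Nat.card (orbitRel.Quotient G V) - 1) * Nat.card G by omega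
  calc Nat.card V = 1 + ∑ ω ∈ Finset.univ.erase ω₀, Nat.card ω.orbit := by
        rw [card_eq_sum_card_orbit G, ← Finset.add_sum_erase _ _ (Finset.mem_univ ω₀), horbit₀]
    _ ≤ 1 + ∑ _ω ∈ Finset.univ.erase ω₀, Nat.card G := by
        gcongr with ω
        rw [orbitRel.Quotient.orbit_eq_orbit_out ω Quotient.out_eq']
        exact card_orbit_le_card_group G _
    _ = 1 + (Nat.card (orbitRel.Quotient G V) - 1) * Nat.card G := by
        rw [Finset.sum_const, Finset.card_erase_of_mem (Finset.mem_univ _), Finset.card_univ,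
          Fintype.card_eq_nat_card, smul_eq_mul]

end MulAction

theorem Real.natCast_le_logb_two_pow {p : ℕ} (hp : 2 ≤ p) (k : ℕ) :
    (k : ℝ) ≤ Real.logb 2 ((p : ℝ) ^ k) := by
  have h : (1 : ℝ) ≤ Real.logb 2 p := by
    rw [Real.le_logb_iff_rpow_le one_lt_two (by positivity), Real.rpow_one]
    exact_mod_cast hp
  rw [Real.logb_pow]
  exact le_mul_of_one_le_right k.cast_nonneg h

theorem ceil_natCast_div_add_one_le {m n d : ℕ} {R : ℝ} (hn : 0 < n) (hdR : (d : ℝ) ≤ R)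
    (h : m ≤ (n - 1) * d) : ⌈(m : ℝ) / R⌉ + 1 ≤ n := by
  have hmR : (m : ℝ) ≤ ((n - 1 : ℕ) : ℝ) * R :=
    calc (m : ℝ) ≤ ((n - 1 : ℕ) : ℝ) * d := by exact_mod_cast h
      _ ≤ ((n - 1 : ℕ) : ℝ) * R := by gcongr
  have hceil := Int.ceil_le.mpr
    (div_le_of_le_mul₀ ((Nat.cast_nonneg d).trans hdR) (Nat.cast_nonneg _) hmR)
  push_cast [hn] at hceil
  omega

open MulAction in
/-- Proposition 2.3: with `w = p^k`, if `|V| = w^(e·b)`, some point `v₀ ∈ V` is fixed by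
every element of `G`, and `|G|` divides `k·a·e²·(w - 1)`, then the number of orbits of
`G` on `V` is at least `⌈(w^e - 1)/(log₂(w)·a·e²·(w - 1))⌉ + 1`. -/
theorem rank_lower_bound_log (p k e b a : ℕ) (hp : p.Prime) (hk : 0 < k) (he : 0 < e)
    (hb : 0 < b) (ha : 0 < a) (G V : Type*) [Group G] [Finite G] [Finite V] [MulAction G V]
    (hV : Nat.card V = (p ^ k) ^ (e * b))
    (v₀ : V) (hfix : ∀ g : G, g • v₀ = v₀)
    (hdvd : Nat.card G ∣ k * a * e ^ 2 * (p ^ k - 1)) :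
    (⌈(((p : ℝ) ^ k) ^ e - 1) /
        (Real.logb 2 ((p : ℝ) ^ k) * (a : ℝ) * (e : ℝ) ^ 2 * ((p : ℝ) ^ k - 1))⌉ + 1 : ℤ) ≤
      Nat.card (MulAction.orbitRel.Quotient G V) := by
  have hN : 0 < Nat.card (orbitRel.Quotient G V) :=
    have : Nonempty (orbitRel.Quotient G V) := ⟨⟦v₀⟧⟩
    Nat.card_pos
  have hw : 2 ≤ p ^ k := hp.two_le.trans (Nat.le_self_pow hk.ne' p)
  have hcount : (p ^ k) ^ e - 1 ≤
      (Nat.card (orbitRel.Quotient G V) - 1) * (k * a * e ^ 2 * (p ^ k - 1)) :=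
    calc (p ^ k) ^ e - 1 ≤ Nat.card V - 1 := by
          rw [hV]
          gcongr
          exacts [by omega, Nat.le_mul_of_pos_right e hb]
      _ ≤ (Nat.card (orbitRel.Quotient G V) - 1) * Nat.card G :=
          card_sub_one_le_of_smul_eq_self G hfix
      _ ≤ _ := by
          gcongr
          exact Nat.le_of_dvd (Nat.mul_pos (by positivity) (by omega)) hdvd
  have hD : ((k * a * e ^ 2 * (p ^ k - 1) : ℕ) : ℝ) ≤
      Real.logb 2 ((p : ℝ) ^ k) * (a : ℝ) * (e : ℝ) ^ 2 * ((p : ℝ) ^ k - 1) := by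
    have hw' : (1 : ℝ) ≤ (p : ℝ) ^ k := by exact_mod_cast hw.trans' one_le_two
    push_cast [Nat.cast_sub (by omega : 1 ≤ p ^ k)]
    gcongr
    exact Real.natCast_le_logb_two_pow hp.two_le k
  have hnum : (((p ^ k) ^ e - 1 : ℕ) : ℝ) = ((p : ℝ) ^ k) ^ e - 1 := by
    push_cast [Nat.one_le_pow _ _ (by omega : 0 < p ^ k)]
    ring
  exact hnum ▸ ceil_natCast_div_add_one_le hN hD hcount
end

section
/- Let α = log₉(96·3^(1/3)) and λ = 2·3^(1/3). Let e ≥ 2 be an integer and let rad(e) denote the product of the distinct prime divisors of e. Let w be a prime power such that rad(e) divides w − 1. If λ·(w^e − 1) ≤ 5·log₂(w)·e^(2α+2)·(w − 1), then e ∈ {2, 3, 4, 5, 6, 7, 8, 9, 16}. -/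
/-!
Since `3^(1/3) ≤ 2`, the exponent `2α + 2` is at most `7`, and `log₂ w ≤ w - 1` for `w ≥ 2`.
Together with `λ ≥ 2` and `w^e - 1 ≥ (w - 1) w^(e-1)`, the inequality collapses to
`2 w^(e-2) < 5 e^7`. On the other hand `w ≥ rad(e) + 1`, and `2 (rad(e) + 1)^(e-2) > 5 e^7`
whenever `e ≥ 10`, `e ≠ 16`: for `e ≤ 15` by computing `rad(e)`, and for `e ≥ 17` because
`rad(e) ≥ 3` unless `e` is a power of `2`, in which case `e ≥ 32`.
-/

open Real

lemma rpow_one_div_three_three_le_two : (3 : ℝ) ^ ((1 : ℝ) / 3) ≤ 2 := by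
  rw [one_div, rpow_inv_le_iff_of_pos (by norm_num) (by norm_num) (by norm_num)]
  norm_num

lemma two_mul_logb_nine_add_two_le_seven :
    2 * logb 9 (96 * (3 : ℝ) ^ ((1 : ℝ) / 3)) + 2 ≤ 7 := by
  have h : logb 9 (96 * (3 : ℝ) ^ ((1 : ℝ) / 3)) ≤ 5 / 2 := by
    rw [logb_le_iff_le_rpow (by norm_num) (by positivity),
      show (9 : ℝ) = 3 ^ (2 : ℝ) by norm_num, ← rpow_mul (by norm_num)]
    norm_num
    linarith [rpow_one_div_three_three_le_two]
  linarith

lemma logb_two_le_sub_one {x : ℝ} (hx : 2 ≤ x) : logb 2 x ≤ x - 1 := by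
  have hhalf : log (x / 2) ≤ x / 2 - 1 := log_le_sub_one_of_pos (by linarith)
  rw [log_div (by linarith) (by norm_num)] at hhalf
  rw [logb, div_le_iff₀ (log_pos one_lt_two)]
  nlinarith [mul_nonneg (sub_nonneg.2 hx) (sub_nonneg.2 log_two_gt_d9.le)]

lemma sub_one_mul_pow_le_pow_succ_sub_one {x : ℝ} (hx : 1 ≤ x) (n : ℕ) :
    (x - 1) * x ^ n ≤ x ^ (n + 1) - 1 := by
  nlinarith [one_le_pow₀ (n := n) hx, pow_succ x n]

lemma two_mul_pow_sub_two_lt_five_mul_pow_seven {x : ℝ} {e : ℕ} (hx : 2 ≤ x) (he : 2 ≤ e)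
    (hineq : (2 * (3 : ℝ) ^ ((1 : ℝ) / 3)) * (x ^ e - 1) ≤
      5 * logb 2 x * (e : ℝ) ^ (2 * logb 9 (96 * (3 : ℝ) ^ ((1 : ℝ) / 3)) + 2) * (x - 1)) :
    2 * x ^ (e - 2) < 5 * (e : ℝ) ^ 7 := by
  obtain ⟨n, rfl⟩ : ∃ n, e = n + 2 := ⟨e - 2, by omega⟩
  rw [Nat.add_sub_cancel]
  have hx1 : 0 < x - 1 := by linarith
  have hlhs :
      2 * ((x - 1) * x ^ (n + 1)) ≤ 2 * (3 : ℝ) ^ ((1 : ℝ) / 3) * (x ^ (n + 2) - 1) := by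
    have hsub := sub_one_mul_pow_le_pow_succ_sub_one (by linarith : 1 ≤ x) (n + 1)
    have hlam : 1 ≤ (3 : ℝ) ^ ((1 : ℝ) / 3) := one_le_rpow (by norm_num) (by norm_num)
    have : 0 ≤ (x - 1) * x ^ (n + 1) := by positivity
    nlinarith
  have hrhs : logb 2 x * ((n + 2 : ℕ) : ℝ) ^ (2 * logb 9 (96 * (3 : ℝ) ^ ((1 : ℝ) / 3)) + 2)
      ≤ (x - 1) * ((n + 2 : ℕ) : ℝ) ^ 7 := by
    refine mul_le_mul (logb_two_le_sub_one hx) ?_ (by positivity) hx1.le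
    rw [← rpow_natCast]
    exact rpow_le_rpow_of_exponent_le (by exact_mod_cast (by omega : 1 ≤ n + 2))
      (by exact_mod_cast two_mul_logb_nine_add_two_le_seven)
  have hdiv : 2 * x ^ (n + 1) ≤ 5 * (x - 1) * ((n + 2 : ℕ) : ℝ) ^ 7 :=
    le_of_mul_le_mul_left (by nlinarith) hx1
  rw [pow_succ] at hdiv
  exact lt_of_mul_lt_mul_right
    (by nlinarith [pow_pos (by positivity : (0 : ℝ) < (n + 2 : ℕ)) 7]) (by linarith : 0 ≤ x)

lemma succ_pow_seven_le_three_mul {n : ℕ} (hn : 8 ≤ n) : (n + 1) ^ 7 ≤ 3 * n ^ 7 := by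
  have h : (8 * (n + 1)) ^ 7 ≤ (9 * n) ^ 7 := Nat.pow_le_pow_left (by omega) 7
  rw [mul_pow, mul_pow] at h
  nlinarith [Nat.zero_le (n ^ 7)]

lemma five_mul_pow_seven_lt_of_le {b m n : ℕ} (hb : 3 ≤ b) (hm : 8 ≤ m)
    (hbase : 5 * m ^ 7 < 2 * b ^ (m - 2)) (hmn : m ≤ n) : 5 * n ^ 7 < 2 * b ^ (n - 2) := by
  induction n, hmn using Nat.le_induction with
  | base => exact hbase
  | succ n hmn ih =>
    calc 5 * (n + 1) ^ 7 ≤ 3 * (5 * n ^ 7) := by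
          linarith [succ_pow_seven_le_three_mul (hm.trans hmn)]
      _ < 3 * (2 * b ^ (n - 2)) := by omega
      _ ≤ b * (2 * b ^ (n - 2)) := Nat.mul_le_mul_right _ hb
      _ = 2 * b ^ (n + 1 - 2) := by rw [show n + 1 - 2 = n - 2 + 1 by omega, pow_succ]; ring

lemma Nat.le_prod_primeFactors_of_prime_dvd {p n : ℕ} (hp : p.Prime) (hpn : p ∣ n) (hn : n ≠ 0) :
    p ≤ ∏ q ∈ n.primeFactors, q :=
  Nat.le_of_dvd (Finset.prod_pos fun _ hq => (Nat.prime_of_mem_primeFactors hq).pos)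
    (Finset.dvd_prod_of_mem _ (Nat.mem_primeFactors.2 ⟨hp, hpn, hn⟩))

lemma Nat.eq_two_pow_of_prod_primeFactors_le_two {n : ℕ} (hn : n ≠ 0)
    (h : ∏ q ∈ n.primeFactors, q ≤ 2) : ∃ k, n = 2 ^ k :=
  ⟨_, Nat.eq_prime_pow_of_unique_prime_dvd hn fun hp hpn =>
    le_antisymm ((Nat.le_prod_primeFactors_of_prime_dvd hp hpn hn).trans h) hp.two_le⟩

lemma five_mul_pow_seven_lt_two_mul_prod_primeFactors_succ_pow {e : ℕ} (he : 10 ≤ e)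
    (he16 : e ≠ 16) :
    5 * e ^ 7 < 2 * (∏ p ∈ e.primeFactors, p + 1) ^ (e - 2) := by
  rcases le_or_gt e 15 with hsmall | hlarge
  · interval_cases e <;> simp [Nat.primeFactors]
  by_cases hrad : ∏ p ∈ e.primeFactors, p ≤ 2
  · have hminFac := Nat.minFac_prime (show e ≠ 1 by omega)
    have hrad2 : 2 ≤ ∏ p ∈ e.primeFactors, p := hminFac.two_le.trans
      (Nat.le_prod_primeFactors_of_prime_dvd hminFac e.minFac_dvd (by omega))
    obtain ⟨k, hek⟩ := Nat.eq_two_pow_of_prod_primeFactors_le_two (by omega) hrad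
    have hk : 4 < k := (Nat.pow_lt_pow_iff_right (by norm_num)).1 (by omega : 2 ^ 4 < 2 ^ k)
    have he32 : 32 ≤ e := hek ▸ Nat.pow_le_pow_right two_pos hk
    calc 5 * e ^ 7 < 2 * 3 ^ (e - 2) :=
          five_mul_pow_seven_lt_of_le le_rfl (by norm_num) (by norm_num) he32
      _ ≤ _ := Nat.mul_le_mul_left _ (Nat.pow_le_pow_left (by omega) _)
  · calc 5 * e ^ 7 < 2 * 4 ^ (e - 2) :=
          five_mul_pow_seven_lt_of_le (by norm_num) (by norm_num) (by norm_num) (by omega : 17 ≤ e)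
      _ ≤ _ := Nat.mul_le_mul_left _ (Nat.pow_le_pow_left (by omega) _)

/-- Proposition 2.7: with `α = log₉(96·3^(1/3))` and `λ = 2·3^(1/3)`, if `e ≥ 2`,
`w` is a prime power with `rad(e) ∣ w - 1`, and
`λ·(w^e - 1) ≤ 5·log₂(w)·e^(2α+2)·(w - 1)`, then `e ∈ {2,3,4,5,6,7,8,9,16}`. -/
theorem e_values (e : ℕ) (he : 2 ≤ e) (w : ℕ) (hw : IsPrimePow w)
    (hrad : (∏ p ∈ e.primeFactors, p) ∣ w - 1)
    (hineq : (2 * (3 : ℝ) ^ ((1 : ℝ) / 3)) * ((w : ℝ) ^ e - 1) ≤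
      5 * Real.logb 2 (w : ℝ) *
        (e : ℝ) ^ (2 * Real.logb 9 (96 * (3 : ℝ) ^ ((1 : ℝ) / 3)) + 2) * ((w : ℝ) - 1)) :
    e ∈ ({2, 3, 4, 5, 6, 7, 8, 9, 16} : Finset ℕ) := by
  have hw2 : 2 ≤ w := hw.two_le
  have hsmall : 2 * w ^ (e - 2) < 5 * e ^ 7 := by
    exact_mod_cast two_mul_pow_sub_two_lt_five_mul_pow_seven (by exact_mod_cast hw2) he hineq
  have hrad_lt : ∏ p ∈ e.primeFactors, p + 1 ≤ w := by
    have := Nat.le_of_dvd (by omega) hrad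
    omega
  by_contra hmem
  have hlarge : 10 ≤ e ∧ e ≠ 16 := by
    simp only [Finset.mem_insert, Finset.mem_singleton] at hmem
    omega
  have hbig := five_mul_pow_seven_lt_two_mul_prod_primeFactors_succ_pow hlarge.1 hlarge.2
  have hmono := Nat.mul_le_mul_left 2 (Nat.pow_le_pow_left hrad_lt (e - 2))
  omega
end

section
/- Let α = log₉(96·3^(1/3)) and λ = 2·3^(1/3). For every integer e ≥ 19 and every real number w ≥ 3, one has λ·(w^e − 1) > 5·log₂(w)·e^(2α+2)·(w − 1). -/
/-!
Since `2·log₉ x = log₃ x` and `96⁶ ≤ 3²⁵`, the exponent `2α + 2` is at most `13/2`. As `log x / x`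
decreases on `[exp 1, ∞)`, `log₂ w ≤ (log₂ 3 / 3)·w ≤ (8/15)·w`, and
`w^e - 1 ≥ w^(e-6)·w(w - 1)(w⁴ + w³ + w² + w + 1) ≥ 121·3^(e-6)·w(w - 1)`.
So it suffices that `(8/3)·e^(13/2) < λ·121·3^(e-6)`, which follows from `λ ≥ 72/25` and the
integer inequality `32·e¹³ < 9^e` for `e ≥ 19`, proved by induction.
At `e = 19, w = 3` the margin is only about 2%, which is why five terms of the geometric sum
are kept.
-/

open Real

lemma two_mul_logb_nine_add_two_le :
    2 * logb 9 (96 * (3 : ℝ) ^ ((1 : ℝ) / 3)) + 2 ≤ 13 / 2 := by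
  have hlog3 : 0 < log 3 := log_pos (by norm_num)
  have hlog9 : log 9 = 2 * log 3 := by
    rw [show (9 : ℝ) = 3 ^ 2 by norm_num, log_pow, Nat.cast_ofNat]
  have hlog96 : 6 * log 96 ≤ 25 * log 3 := by
    have := log_le_log (by norm_num) (show (96 : ℝ) ^ 6 ≤ 3 ^ 25 by norm_num)
    simpa only [log_pow, Nat.cast_ofNat] using this
  have hlogb : logb 9 (96 * (3 : ℝ) ^ ((1 : ℝ) / 3)) ≤ 9 / 4 := by
    rw [logb, hlog9, log_mul (by norm_num) (by positivity), log_rpow (by norm_num),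
      div_le_iff₀ (by positivity)]
    linarith
  linarith

lemma seventy_two_div_twenty_five_le_two_mul_rpow :
    72 / 25 ≤ 2 * (3 : ℝ) ^ ((1 : ℝ) / 3) := by
  have h : (36 / 25 : ℝ) ≤ (3 : ℝ) ^ ((3 : ℝ)⁻¹) :=
    (le_rpow_inv_iff_of_pos (by norm_num) (by norm_num) (by norm_num)).2 (by norm_num)
  rw [one_div]
  linarith

lemma logb_two_le_of_three_le {w : ℝ} (hw : 3 ≤ w) : logb 2 w ≤ 8 / 15 * w := by
  have hlog3 : 5 * log 3 ≤ 8 * log 2 := by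
    have := log_le_log (by norm_num) (show (3 : ℝ) ^ 5 ≤ 2 ^ 8 by norm_num)
    simpa only [log_pow, Nat.cast_ofNat] using this
  have he3 : exp 1 ≤ 3 := (exp_one_lt_d9.trans (by norm_num)).le
  have hratio : log w / w ≤ log 3 / 3 := log_div_self_antitoneOn he3 (he3.trans hw) hw
  rw [div_le_div_iff₀ (by linarith) (by norm_num)] at hratio
  rw [logb, div_le_iff₀ (log_pos one_lt_two)]
  nlinarith [log_pos one_lt_two]

lemma thirty_two_mul_pow_thirteen_lt_nine_pow {n : ℕ} (hn : 19 ≤ n) : 32 * n ^ 13 < 9 ^ n := by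
  induction n, hn using Nat.le_induction with
  | base => norm_num
  | succ n hn ih =>
    have hstep : 19 ^ 13 * (n + 1) ^ 13 ≤ 19 ^ 13 * (9 * n ^ 13) :=
      calc 19 ^ 13 * (n + 1) ^ 13 = (19 * (n + 1)) ^ 13 := by ring
        _ ≤ (20 * n) ^ 13 := Nat.pow_le_pow_left (by omega) 13
        _ = 20 ^ 13 * n ^ 13 := by ring
        _ ≤ 19 ^ 13 * (9 * n ^ 13) := by rw [← mul_assoc]; gcongr; norm_num
    have hratio := Nat.le_of_mul_le_mul_left hstep (by norm_num)
    rw [pow_succ 9 n]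
    linarith

lemma rpow_thirteen_halves_lt {n : ℕ} (hn : 19 ≤ n) :
    (n : ℝ) ^ ((13 : ℝ) / 2) < 5 / 28 * 3 ^ n := by
  have hsq : ((n : ℝ) ^ ((13 : ℝ) / 2)) ^ 2 = (n : ℝ) ^ 13 := by
    rw [← rpow_natCast, ← rpow_mul n.cast_nonneg]
    norm_num
  have hnat : (32 : ℝ) * (n : ℝ) ^ 13 < 9 ^ n := by
    exact_mod_cast thirty_two_mul_pow_thirteen_lt_nine_pow hn
  have hpow : (9 : ℝ) ^ n = (3 ^ n) ^ 2 := by rw [← pow_mul, mul_comm, pow_mul]; norm_num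
  have hpos : 0 ≤ (n : ℝ) ^ ((13 : ℝ) / 2) := by positivity
  rw [← pow_lt_pow_iff_left₀ (by positivity) (by positivity) two_ne_zero]
  nlinarith

lemma mul_pow_le_pow_sub_one (m : ℕ) {w : ℝ} (hw : 3 ≤ w) :
    121 * 3 ^ m * (w * (w - 1)) ≤ w ^ (m + 6) - 1 := by
  have hw1 : 0 ≤ w * (w - 1) := by nlinarith
  have hone : 1 ≤ w ^ (m + 1) := one_le_pow₀ (by linarith)
  have hquartic : 121 ≤ w ^ 4 + w ^ 3 + w ^ 2 + w + 1 := by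
    have : (3 : ℝ) ^ 4 + 3 ^ 3 + 3 ^ 2 + 3 + 1 ≤ w ^ 4 + w ^ 3 + w ^ 2 + w + 1 := by gcongr
    linarith
  calc 121 * 3 ^ m * (w * (w - 1)) ≤ (w ^ 4 + w ^ 3 + w ^ 2 + w + 1) * w ^ m * (w * (w - 1)) := by
        gcongr
    _ = w ^ (m + 6) - w ^ (m + 1) := by ring
    _ ≤ w ^ (m + 6) - 1 := by linarith

/-- Inequality from the proof of Proposition 2.7: with `α = log₉(96·3^(1/3))` and
`λ = 2·3^(1/3)`, for every integer `e ≥ 19` and real `w ≥ 3`,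
`λ·(w^e - 1) > 5·log₂(w)·e^(2α+2)·(w - 1)`. -/
theorem e_at_least_19_ruled_out (e : ℕ) (he : 19 ≤ e) (w : ℝ) (hw : 3 ≤ w) :
    (2 * (3 : ℝ) ^ ((1 : ℝ) / 3)) * (w ^ e - 1) >
      5 * Real.logb 2 w *
        (e : ℝ) ^ (2 * Real.logb 9 (96 * (3 : ℝ) ^ ((1 : ℝ) / 3)) + 2) * (w - 1) := by
  have hw1 : 0 ≤ w - 1 := by linarith
  have hww : 0 < w * (w - 1) := by nlinarith
  have hlogb : 0 ≤ logb 2 w := logb_nonneg one_lt_two (by linarith)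
  have hexp := rpow_le_rpow_of_exponent_le (Nat.one_le_cast.2 (by omega : 1 ≤ e))
    two_mul_logb_nine_add_two_le
  have hpoly := rpow_thirteen_halves_lt he
  obtain ⟨m, rfl⟩ : ∃ m, e = m + 6 := ⟨e - 6, by omega⟩
  calc 5 * logb 2 w * ((m + 6 : ℕ) : ℝ) ^ (2 * logb 9 (96 * (3 : ℝ) ^ ((1 : ℝ) / 3)) + 2) * (w - 1)
      ≤ 5 * (8 / 15 * w) * ((m + 6 : ℕ) : ℝ) ^ ((13 : ℝ) / 2) * (w - 1) := by
        gcongr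
        exact logb_two_le_of_three_le hw
    _ = 8 / 3 * ((m + 6 : ℕ) : ℝ) ^ ((13 : ℝ) / 2) * (w * (w - 1)) := by ring
    _ < 8 / 3 * (5 / 28 * 3 ^ (m + 6)) * (w * (w - 1)) := by gcongr
    _ = 2430 / 7 * (3 ^ m * (w * (w - 1))) := by ring
    _ ≤ 8712 / 25 * (3 ^ m * (w * (w - 1))) :=
        mul_le_mul_of_nonneg_right (by norm_num) (by positivity)
    _ = 72 / 25 * (121 * 3 ^ m * (w * (w - 1))) := by ring
    _ ≤ 2 * (3 : ℝ) ^ ((1 : ℝ) / 3) * (w ^ (m + 6) - 1) :=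
        mul_le_mul seventy_two_div_twenty_five_le_two_mul_rpow (mul_pow_le_pow_sub_one m hw)
          (by positivity) (by positivity)
end
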